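/- There exists a universal constant c > 0 such that for every integer n ≥ 2 and every p ∈ [2, ∞), γ_{(p)}(A_prefix) ≥ c · n^{1/p} · ln(n), where A_prefix ∈ ℝ^{n×n} is the lower-triangular all-ones matrix. -/

import Mathlib

open MeasureTheory Matrix
open scoped ENNReal

noncomputable section

namespace DPPaper

variable {ι κ : Type*}

/-- Two inputs `x, x' : ι → ℝ` are neighboring if `‖x - x'‖₁ ≤ 1`. -/
def Neighboring [Fintype ι] (x x' : ι → ℝ) : Prop :=
  ∑ i, |x i - x' i| ≤ 1

/-- A mechanism `M` (a map from inputs to probability measures on an output space `Ω`)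
is `(ε,δ)`-differentially private if for all neighboring inputs and all measurable sets `S`,
`M x S ≤ e^ε · M x' S + δ`. -/
def IsDP [Fintype ι] {Ω : Type*} [MeasurableSpace Ω]
    (M : (ι → ℝ) → Measure Ω) (ε δ : ℝ) : Prop :=
  ∀ x x' : ι → ℝ, Neighboring x x' → ∀ S : Set Ω, MeasurableSet S →
    M x S ≤ ENNReal.ofReal (Real.exp ε) * M x' S + ENNReal.ofReal δ

/-- The `ℓ_p^p`-error of a mechanism `M` on the query matrix `A`:
`sup_x (E_{Y ~ M x} [ ‖Y - A x‖_p^p ])^{1/p}`, valued in `ℝ≥0∞`. -/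
def errLp [Fintype ι] [Fintype κ] (M : (ι → ℝ) → Measure (κ → ℝ))
    (A : Matrix κ ι ℝ) (p : ℝ) : ℝ≥0∞ :=
  ⨆ x : ι → ℝ,
    (∫⁻ y, ENNReal.ofReal (∑ i, |y i - A.mulVec x i| ^ p) ∂(M x)) ^ (1 / p)

/-- The `q`-trace of a square matrix: `(∑ i, U i i ^ q)^{1/q}`. -/
def trq [Fintype κ] (q : ℝ) (U : Matrix κ κ ℝ) : ℝ :=
  (∑ i, (U i i) ^ q) ^ (1 / q)

/-- The `1 → 2` operator norm of a matrix: the largest `ℓ₂`-norm of a column. -/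
def norm12 [Fintype ι] [Fintype κ] (R : Matrix κ ι ℝ) : ℝ :=
  ⨆ j : ι, Real.sqrt (∑ i, (R i j) ^ 2)

/-- The factorization norm `γ_{(p)}(A)`. -/
def gammaP [Fintype ι] [Fintype κ] (p : ℝ) (A : Matrix κ ι ℝ) : ℝ :=
  sInf { c : ℝ | ∃ (k : ℕ) (L : Matrix κ (Fin k) ℝ) (R : Matrix (Fin k) ι ℝ),
    L * R = A ∧ c = Real.sqrt (trq (p / 2) (L * Lᵀ)) * norm12 R }

/-- The old Mathlib `Matrix.PosSemidef.sqrt` (removed since), spelled out with its old definition. -/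
def psdSqrt [Fintype ι] [DecidableEq ι] {A : Matrix ι ι ℝ} (hA : A.PosSemidef) : Matrix ι ι ℝ :=
  hA.1.eigenvectorUnitary.1 * diagonal ((↑) ∘ (√·) ∘ hA.1.eigenvalues) *
    (star hA.1.eigenvectorUnitary : Matrix ι ι ℝ)

/-- The Schatten-1 norm of a matrix: the trace of the PSD square root of `Aᵀ * A`,
i.e. the sum of the singular values of `A`. -/
def schatten1 [Fintype ι] [Fintype κ] [DecidableEq ι] (A : Matrix κ ι ℝ) : ℝ :=
  (psdSqrt (Matrix.posSemidef_conjTranspose_mul_self A)).trace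

/-- The sensitivity polytope `A B₁^n = {A x : ‖x‖₁ ≤ 1}`. -/
def sensPolytope [Fintype ι] (A : Matrix κ ι ℝ) : Set (κ → ℝ) :=
  {v | ∃ x : ι → ℝ, (∑ i, |x i|) ≤ 1 ∧ v = A.mulVec x}

/-- The width of a set `K` in direction `θ`. -/
def width [Fintype κ] (K : Set (κ → ℝ)) (θ : κ → ℝ) : ℝ :=
  sSup ((fun v => ∑ i, θ i * v i) '' K) - sInf ((fun v => ∑ i, θ i * v i) '' K)

/-- `κ(A)`: the minimal width of the sensitivity polytope over all unit directions. -/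
def kappa [Fintype ι] [Fintype κ] (A : Matrix κ ι ℝ) : ℝ :=
  sInf { c : ℝ | ∃ θ : κ → ℝ, (∑ i, (θ i) ^ 2) = 1 ∧ c = width (sensPolytope A) θ }

/-- The prefix-sum (continual counting) matrix: lower-triangular all ones. -/
def Aprefix (n : ℕ) : Matrix (Fin n) (Fin n) ℝ :=
  fun i j => if j ≤ i then 1 else 0

/-- The covariance matrix of a measure on `κ → ℝ`. -/
def covMatrix [Fintype κ] (μ : Measure (κ → ℝ)) : Matrix κ κ ℝ :=
  fun i j => ∫ y, (y i - ∫ y', y' i ∂μ) * (y j - ∫ y', y' j ∂μ) ∂μ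

/-- The parity query matrix `Q_{d,w}`: rows indexed by `w`-element subsets `P` of `{1,…,d}`,
columns indexed by points of `{-1,1}^d` (encoded as `Fin d → Bool`), entry `∏_{i ∈ P} x_i`. -/
def parityMatrix (d w : ℕ) : Matrix {P : Finset (Fin d) // P.card = w} (Fin d → Bool) ℝ :=
  fun P b => ∏ i ∈ P.1, (if b i then (1 : ℝ) else -1)

/-- The Hadamard matrices: `H_0 = [1]`, `H_{d+1} = [[H_d, H_d], [H_d, -H_d]]`. -/
def Hadamard : (d : ℕ) → Matrix (Fin (2 ^ d)) (Fin (2 ^ d)) ℝ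
  | 0 => fun _ _ => 1
  | (d + 1) =>
    Matrix.reindex
      (finSumFinEquiv.trans (finCongr (by rw [pow_succ, mul_two])))
      (finSumFinEquiv.trans (finCongr (by rw [pow_succ, mul_two])))
      (Matrix.fromBlocks (Hadamard d) (Hadamard d) (Hadamard d) (-(Hadamard d)))

end DPPaper

open DPPaper

/-!
If `A = L R` and `K` is a kernel whose bilinear form is bounded by `C ‖u‖₂ ‖v‖₂`, then
`∑ A_ij K_ij = ∑_s ⟨L_{·s}, K R_{s·}⟩ ≤ C ‖L‖_F ‖R‖_F`. The power-mean inequality on the diagonal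
of `L Lᵀ` gives `‖L‖_F ≤ n^{1/2 - 1/p} √(tr_{p/2}(L Lᵀ))`, and `‖R‖_F ≤ √n ‖R‖_{1→2}`, so
`γ_(p)(A) ≥ n^{1/p - 1} ∑ A_ij K_ij / C`.

For `A_prefix` take the Toeplitz kernel `K_ij = k(i - j)` with
`k(x) = N⁻¹ ∑_{t < N} (π - θ_t) sin(x θ_t)`, `θ_t = 2πt/N`: a discretization of the Fourier
series `(π - θ)/2 = ∑_{m ≥ 1} sin(mθ)/m` of the sawtooth. Writing `∑ u_i v_j sin((i - j)θ)` as
the imaginary part of `û(θ) conj (v̂(θ))` with `|π - θ_t| ≤ π`, discrete Parseval gives `C = π`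
once `n ≤ N`. Summing geometric series, `k(m) = (π/N) cot(πm/N) ≥ 1/m - π²m/N²`, so for
`N = 4n²` the pairing with `A_prefix` is, up to an error below `1/2`, the sum
`∑_{i<n} H_i = n (H_n - 1) ≳ n log n` of harmonic numbers.
-/

open Finset Real

section RootsOfUnity

variable {K : Type*} [Field K] {z : K} {N : ℕ}

theorem geom_sum_eq_zero_of_pow_eq_one (hz : z ≠ 1) (hzN : z ^ N = 1) :
    ∑ t ∈ range N, z ^ t = 0 := by
  rw [geom_sum_eq hz, hzN, sub_self, zero_div]

theorem sum_range_mul_pow_eq_of_pow_eq_one (hz : z ≠ 1) (hzN : z ^ N = 1) :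
    ∑ t ∈ range N, (t : K) * z ^ t = N / (z - 1) := by
  rw [eq_div_iff (sub_ne_zero.2 hz), sum_mul]
  have htel : ∀ t : ℕ, (t : K) * z ^ t * (z - 1) =
      ((t + 1 : ℕ) * z ^ (t + 1) - t * z ^ t) - z * z ^ t := fun t => by
    push_cast; ring
  rw [sum_congr rfl fun t _ => htel t, sum_sub_distrib, sum_range_sub (fun t => (t : K) * z ^ t),
    ← mul_sum, geom_sum_eq_zero_of_pow_eq_one hz hzN]
  simp [hzN]

end RootsOfUnity

namespace Complex

theorem exp_mul_two_pi_div_mul_I_eq_pow (N t : ℕ) (m : ℤ) :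
    exp (↑((m : ℝ) * (2 * π * t / N)) * I) = (exp (2 * π * I / N) ^ m) ^ t := by
  rw [← exp_int_mul, ← exp_nat_mul]
  push_cast
  ring_nf

theorem exp_two_pi_I_div_zpow_ne_one {N : ℕ} (hN : N ≠ 0) {m : ℤ} (hm : ¬ (N : ℤ) ∣ m) :
    exp (2 * π * I / N) ^ m ≠ 1 := by
  rwa [Ne, (isPrimitiveRoot_exp N hN).zpow_eq_one_iff_dvd]

theorem exp_two_pi_I_div_zpow_pow_eq_one (N : ℕ) (m : ℤ) :
    (exp (2 * π * I / N) ^ m) ^ N = 1 := by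
  rcases eq_or_ne N 0 with rfl | hN
  · simp
  · rw [← exp_int_mul, ← exp_nat_mul, ← exp_int_mul_two_pi_mul_I m]
    congr 1
    field_simp

theorem sum_exp_mul_two_pi_div_mul_I_eq_zero {N : ℕ} {m : ℤ} (hm : ¬ (N : ℤ) ∣ m) :
    ∑ t ∈ range N, exp (↑((m : ℝ) * (2 * π * t / N)) * I) = 0 := by
  rcases eq_or_ne N 0 with rfl | hN
  · simp
  simp only [exp_mul_two_pi_div_mul_I_eq_pow]
  exact geom_sum_eq_zero_of_pow_eq_one (exp_two_pi_I_div_zpow_ne_one hN hm)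
    (exp_two_pi_I_div_zpow_pow_eq_one N m)

end Complex

namespace DPPaper

section FactorizationNorm

variable {ι κ : Type*} [Fintype ι] [Fintype κ]

theorem le_gammaP {p b : ℝ} {A : Matrix κ ι ℝ}
    (hb : ∀ (k : ℕ) (L : Matrix κ (Fin k) ℝ) (R : Matrix (Fin k) ι ℝ), L * R = A →
      b ≤ √(trq (p / 2) (L * Lᵀ)) * norm12 R) :
    b ≤ gammaP p A := by
  classical
  refine le_csInf ?_ fun c ⟨k, L, R, hLR, hc⟩ => hc ▸ hb k L R hLR
  let e := Fintype.equivFin ι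
  refine ⟨_, _, A.submatrix id e.symm, (1 : Matrix ι ι ℝ).submatrix e.symm id, ?_, rfl⟩
  rw [Matrix.submatrix_mul_equiv, Matrix.mul_one, Matrix.submatrix_id_id]

theorem trace_le_card_rpow_mul_trq {q : ℝ} (hq : 1 ≤ q) {U : Matrix κ κ ℝ}
    (hU : ∀ i, 0 ≤ U i i) :
    U.trace ≤ (Fintype.card κ : ℝ) ^ (1 - 1 / q) * trq q U := by
  rw [Matrix.trace, trq]
  have hq0 : q ≠ 0 := by positivity
  have htr : 0 ≤ ∑ i, U i i := sum_nonneg fun i _ => hU i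
  have hsum := rpow_sum_le_const_mul_sum_rpow_of_nonneg (s := univ) hq fun i _ => hU i
  rw [card_univ] at hsum
  have := rpow_le_rpow (by positivity) hsum (by positivity : 0 ≤ 1 / q)
  rwa [← rpow_mul htr, mul_one_div_cancel hq0, rpow_one,
    mul_rpow (by positivity) (sum_nonneg fun i _ => rpow_nonneg (hU i) _),
    ← rpow_mul (Nat.cast_nonneg _), sub_mul, one_mul, mul_one_div_cancel hq0] at this

theorem sqrt_sum_sq_le_card_rpow_mul_trq {p : ℝ} (hp : 2 ≤ p) {k : Type*} [Fintype k]
    (L : Matrix κ k ℝ) :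
    √(∑ i, ∑ s, L i s ^ 2) ≤
      (Fintype.card κ : ℝ) ^ (1 / 2 - 1 / p) * √(trq (p / 2) (L * Lᵀ)) := by
  have hdiag : ∀ i, (L * Lᵀ) i i = ∑ s, L i s ^ 2 := fun i => by
    simp only [Matrix.mul_apply, Matrix.transpose_apply, sq]
  have htr := trace_le_card_rpow_mul_trq (by linarith : 1 ≤ p / 2)
    (fun i => (hdiag i).symm ▸ sum_nonneg fun s _ => sq_nonneg (L i s))
  simp only [Matrix.trace, Matrix.diag_apply, hdiag] at htr
  calc √(∑ i, ∑ s, L i s ^ 2)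
      ≤ √((Fintype.card κ : ℝ) ^ (1 - 1 / (p / 2)) * trq (p / 2) (L * Lᵀ)) := sqrt_le_sqrt htr
    _ = _ := by
      rw [sqrt_mul (by positivity), sqrt_eq_rpow, ← rpow_mul (Nat.cast_nonneg _)]
      congr 2
      field_simp

theorem sqrt_sum_sq_le_sqrt_card_mul_norm12 {k : Type*} [Fintype k] (R : Matrix k ι ℝ) :
    √(∑ s, ∑ j, R s j ^ 2) ≤ √(Fintype.card ι) * norm12 R := by
  have hcol : ∀ j, √(∑ s, R s j ^ 2) ≤ norm12 R := fun j =>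
    le_ciSup (f := fun j => √(∑ s, R s j ^ 2)) (Set.finite_range _).bddAbove j
  have hnorm : 0 ≤ norm12 R := Real.iSup_nonneg fun j => sqrt_nonneg _
  rw [← sqrt_sq hnorm, ← sqrt_mul (Nat.cast_nonneg _), sum_comm]
  refine sqrt_le_sqrt ?_
  calc ∑ j, ∑ s, R s j ^ 2 ≤ ∑ _j : ι, norm12 R ^ 2 :=
        sum_le_sum fun j _ => (sqrt_le_iff.1 (hcol j)).2
    _ = _ := by rw [sum_const, card_univ, nsmul_eq_mul]

variable {C : ℝ} {K : Matrix κ ι ℝ}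

theorem sum_mul_mul_le_of_bilinear_le (hC : 0 ≤ C)
    (hK : ∀ (u : κ → ℝ) (v : ι → ℝ),
      ∑ i, ∑ j, u i * v j * K i j ≤ C * √(∑ i, u i ^ 2) * √(∑ j, v j ^ 2))
    {k : Type*} [Fintype k] (L : Matrix κ k ℝ) (R : Matrix k ι ℝ) :
    ∑ i, ∑ j, (L * R) i j * K i j ≤ C * √(∑ i, ∑ s, L i s ^ 2) * √(∑ s, ∑ j, R s j ^ 2) := by
  calc ∑ i, ∑ j, (L * R) i j * K i j = ∑ i, ∑ s, ∑ j, L i s * R s j * K i j :=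
        sum_congr rfl fun i _ => by simp_rw [Matrix.mul_apply, sum_mul]; exact sum_comm
    _ = ∑ s, ∑ i, ∑ j, L i s * R s j * K i j := sum_comm
    _ ≤ ∑ s, C * (√(∑ i, L i s ^ 2) * √(∑ j, R s j ^ 2)) := sum_le_sum fun s _ =>
        (hK (fun i => L i s) (R s)).trans_eq (mul_assoc _ _ _)
    _ ≤ C * (√(∑ s, ∑ i, L i s ^ 2) * √(∑ s, ∑ j, R s j ^ 2)) := by
        rw [← mul_sum]
        gcongr
        exact sum_sqrt_mul_sqrt_le _ (fun s => sum_nonneg fun i _ => sq_nonneg _)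
          (fun s => sum_nonneg fun j _ => sq_nonneg _)
    _ = _ := by rw [sum_comm (f := fun s i => L i s ^ 2), mul_assoc]

theorem sum_mul_le_of_bilinear_le {p : ℝ} (hC : 0 ≤ C) (hp : 2 ≤ p) {A : Matrix κ ι ℝ}
    (hK : ∀ (u : κ → ℝ) (v : ι → ℝ),
      ∑ i, ∑ j, u i * v j * K i j ≤ C * √(∑ i, u i ^ 2) * √(∑ j, v j ^ 2))
    {k : Type*} [Fintype k] {L : Matrix κ k ℝ} {R : Matrix k ι ℝ} (hLR : L * R = A) :
    ∑ i, ∑ j, A i j * K i j ≤ C * (Fintype.card κ : ℝ) ^ (1 / 2 - 1 / p) *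
      √(Fintype.card ι) * (√(trq (p / 2) (L * Lᵀ)) * norm12 R) := by
  subst hLR
  calc _ ≤ C * √(∑ i, ∑ s, L i s ^ 2) * √(∑ s, ∑ j, R s j ^ 2) :=
        sum_mul_mul_le_of_bilinear_le hC hK L R
    _ ≤ C * ((Fintype.card κ : ℝ) ^ (1 / 2 - 1 / p) * √(trq (p / 2) (L * Lᵀ))) *
        (√(Fintype.card ι) * norm12 R) := by
      gcongr
      · exact sqrt_sum_sq_le_card_rpow_mul_trq hp L
      · exact sqrt_sum_sq_le_sqrt_card_mul_norm12 R
    _ = _ := by ring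

end FactorizationNorm

section SawtoothKernel

open Complex ComplexConjugate

def sawtoothKernel (N : ℕ) (x : ℝ) : ℝ :=
  (N : ℝ)⁻¹ * ∑ t ∈ range N, (π - 2 * π * t / N) * Real.sin (x * (2 * π * t / N))

theorem sawtoothKernel_intCast {N : ℕ} {m : ℤ} (hm : ¬ (N : ℤ) ∣ m) :
    sawtoothKernel N m = π / N * Real.cot (π * m / N) := by
  rcases eq_or_ne N 0 with rfl | hN
  · simp [sawtoothKernel]
  set z := exp (2 * π * I / N) ^ m with hz
  have hz1 : z ≠ 1 := exp_two_pi_I_div_zpow_ne_one hN hm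
  have hzN : z ^ N = 1 := exp_two_pi_I_div_zpow_pow_eq_one N m
  have h1z : (1 : ℂ) - z ≠ 0 := sub_ne_zero.2 hz1.symm
  have hsum : ∑ t ∈ range N, ((π - 2 * π * t / N : ℝ) : ℂ) * z ^ t = 2 * π / (1 - z) := by
    calc _ = π * ∑ t ∈ range N, z ^ t - 2 * π / N * ∑ t ∈ range N, (t : ℂ) * z ^ t := by
          rw [mul_sum, mul_sum, ← sum_sub_distrib]
          exact sum_congr rfl fun t _ => by push_cast; ring
      _ = 2 * π / (1 - z) := by
          rw [geom_sum_eq_zero_of_pow_eq_one hz1 hzN, sum_range_mul_pow_eq_of_pow_eq_one hz1 hzN]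
          field_simp
          ring
  have hcot : (2 * π / (1 - z) : ℂ) = π * (1 + I * ↑(Real.cot (π * m / N))) := by
    have hexp : exp (2 * π * I * ((m : ℂ) / N)) = z := by rw [hz, ← exp_int_mul]; ring_nf
    rw [ofReal_cot, show ((π * m / N : ℝ) : ℂ) = π * ((m : ℂ) / N) by push_cast; ring,
      cot_pi_eq_exp_ratio, hexp]
    field_simp
    ring
  have him := congrArg Complex.im (hsum.trans hcot)
  simp only [im_sum, hz, ← exp_mul_two_pi_div_mul_I_eq_pow, im_ofReal_mul,
    exp_ofReal_mul_I_im] at him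
  rw [sawtoothKernel, him, add_im, mul_im]
  simp only [ofReal_re, ofReal_im, one_im, I_re, I_im]
  ring

theorem one_div_sub_le_cot {x : ℝ} (hx0 : 0 < x) (hx1 : x ≤ 1) : 1 / x - x ≤ Real.cot x := by
  have hsin : 0 < Real.sin x := sin_pos_of_pos_of_lt_pi hx0 (by linarith [pi_gt_three])
  rw [Real.cot_eq_cos_div_sin, div_sub' hx0.ne', div_le_div_iff₀ hx0 hsin]
  have : 0 ≤ 1 - x * x := by nlinarith
  nlinarith [mul_le_mul_of_nonneg_left (Real.sin_le hx0.le) this,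
    mul_le_mul_of_nonneg_left (one_sub_sq_div_two_le_cos (x := x)) hx0.le]

theorem one_div_sub_le_sawtoothKernel {N m : ℕ} (hm : 0 < m) (hmN : π * m ≤ N) :
    1 / m - π ^ 2 * m / N ^ 2 ≤ sawtoothKernel N m := by
  have hm' : (0 : ℝ) < m := Nat.cast_pos.2 hm
  have hN : (0 : ℝ) < N := by nlinarith [pi_gt_three]
  have hmN' : m < N := by exact_mod_cast (by nlinarith [pi_gt_three] : (m : ℝ) < N)
  have hdvd : ¬ (N : ℤ) ∣ m := by exact_mod_cast Nat.not_dvd_of_pos_of_lt hm hmN'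
  rw [← Int.cast_natCast, sawtoothKernel_intCast hdvd, Int.cast_natCast]
  calc 1 / m - π ^ 2 * m / N ^ 2 = π / N * (1 / (π * m / N) - π * m / N) := by field_simp
    _ ≤ π / N * Real.cot (π * m / N) := by
        gcongr
        exact one_div_sub_le_cot (by positivity) ((div_le_one hN).2 hmN)

def trigSum {n : ℕ} (u : Fin n → ℝ) (θ : ℝ) : ℂ :=
  ∑ i, (u i : ℂ) * exp (↑((i : ℕ) * θ) * I)

theorem trigSum_mul_conj {n : ℕ} (u v : Fin n → ℝ) (θ : ℝ) :
    trigSum u θ * conj (trigSum v θ) =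
      ∑ i, ∑ j, (u i * v j : ℂ) * exp (↑((((i : ℕ) : ℝ) - (j : ℕ)) * θ) * I) := by
  simp only [trigSum, map_sum, map_mul, conj_ofReal, ← Complex.exp_conj, conj_I, sum_mul_sum]
  refine sum_congr rfl fun i _ => sum_congr rfl fun j _ => ?_
  rw [mul_mul_mul_comm, ← Complex.exp_add]
  push_cast
  ring_nf

theorem sum_exp_sub_mul_two_pi_div_mul_I_eq_ite {n N : ℕ} (hnN : n ≤ N) (i j : Fin n) :
    ∑ t ∈ range N, exp (↑((((i : ℕ) : ℝ) - (j : ℕ)) * (2 * π * t / N)) * I) =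
      if i = j then (N : ℂ) else 0 := by
  split_ifs with hij
  · simp [hij]
  have hdvd : ¬ (N : ℤ) ∣ ((i : ℕ) - (j : ℕ) : ℤ) := fun h => hij <| Fin.ext <| by
    have := Int.eq_zero_of_abs_lt_dvd h (by rw [abs_lt]; omega)
    omega
  have := sum_exp_mul_two_pi_div_mul_I_eq_zero hdvd
  push_cast at this ⊢
  exact this

theorem sum_norm_trigSum_sq {n N : ℕ} (hnN : n ≤ N) (u : Fin n → ℝ) :
    ∑ t ∈ range N, ‖trigSum u (2 * π * t / N)‖ ^ 2 = N * ∑ i, u i ^ 2 := by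
  have hnorm : ∀ w : ℂ, ‖w‖ ^ 2 = (w * conj w).re := fun w => by
    rw [mul_conj', ← ofReal_pow, ofReal_re]
  calc ∑ t ∈ range N, ‖trigSum u (2 * π * t / N)‖ ^ 2
      = (∑ i, ∑ j, (u i * u j : ℂ) * ∑ t ∈ range N,
          exp (↑((((i : ℕ) : ℝ) - (j : ℕ)) * (2 * π * t / N)) * I)).re := by
        simp_rw [hnorm, ← re_sum, trigSum_mul_conj, mul_sum]
        rw [sum_comm]
        exact congrArg _ (sum_congr rfl fun i _ => sum_comm)
    _ = N * ∑ i, u i ^ 2 := by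
        simp_rw [sum_exp_sub_mul_two_pi_div_mul_I_eq_ite hnN, mul_ite, mul_zero, sum_ite_eq,
          mem_univ, if_true]
        rw [re_sum, mul_sum]
        exact sum_congr rfl fun i _ => by
          simp only [← ofReal_natCast, ← ofReal_mul, ofReal_re]; ring

theorem sum_mul_sawtoothKernel_eq {n : ℕ} (N : ℕ) (u v : Fin n → ℝ) :
    ∑ i, ∑ j, u i * v j * sawtoothKernel N (((i : ℕ) : ℝ) - (j : ℕ)) =
      (N : ℝ)⁻¹ * ∑ t ∈ range N, (π - 2 * π * t / N) *
        (trigSum u (2 * π * t / N) * conj (trigSum v (2 * π * t / N))).im := by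
  simp_rw [trigSum_mul_conj, im_sum, ← ofReal_mul, im_ofReal_mul, exp_ofReal_mul_I_im,
    sawtoothKernel, mul_sum]
  refine (sum_congr rfl fun i _ => sum_comm).trans (sum_comm.trans ?_)
  exact sum_congr rfl fun t _ => sum_congr rfl fun i _ => sum_congr rfl fun j _ => by ring

theorem sum_mul_sawtoothKernel_le {n N : ℕ} (hnN : n ≤ N) (u v : Fin n → ℝ) :
    ∑ i, ∑ j, u i * v j * sawtoothKernel N (((i : ℕ) : ℝ) - (j : ℕ)) ≤
      π * √(∑ i, u i ^ 2) * √(∑ j, v j ^ 2) := by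
  rcases Nat.eq_zero_or_pos N with rfl | hN
  · obtain rfl : n = 0 := Nat.le_zero.1 hnN
    simp
  have hN' : (0 : ℝ) < N := Nat.cast_pos.2 hN
  set F := fun t : ℕ => ‖trigSum u (2 * π * t / N)‖
  set G := fun t : ℕ => ‖trigSum v (2 * π * t / N)‖
  have hterm : ∀ t ∈ range N, (π - 2 * π * t / N) *
      (trigSum u (2 * π * t / N) * conj (trigSum v (2 * π * t / N))).im ≤ π * (F t * G t) := by
    intro t ht
    have hθ : 2 * π * t / N ≤ 2 * π := by
      rw [div_le_iff₀ hN']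
      nlinarith [pi_pos, (by exact_mod_cast (mem_range.1 ht).le : (t : ℝ) ≤ N)]
    have hweight : |π - 2 * π * t / N| ≤ π := by
      rw [abs_le]
      constructor <;> nlinarith [pi_pos, (by positivity : 0 ≤ 2 * π * t / N)]
    calc _ ≤ |π - 2 * π * t / N| * |(trigSum u (2 * π * t / N) *
          conj (trigSum v (2 * π * t / N))).im| := by rw [← abs_mul]; exact le_abs_self _
      _ ≤ π * (F t * G t) := by
          gcongr
          refine (abs_im_le_norm _).trans_eq ?_
          rw [norm_mul, norm_conj]
  calc _ ≤ (N : ℝ)⁻¹ * ∑ t ∈ range N, π * (F t * G t) := by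
        rw [sum_mul_sawtoothKernel_eq]
        exact mul_le_mul_of_nonneg_left (sum_le_sum hterm) (by positivity)
    _ ≤ (N : ℝ)⁻¹ * (π * (√(∑ t ∈ range N, F t ^ 2) * √(∑ t ∈ range N, G t ^ 2))) := by
        rw [← mul_sum]
        gcongr
        exact sum_mul_le_sqrt_mul_sqrt _ _ _
    _ = π * √(∑ i, u i ^ 2) * √(∑ j, v j ^ 2) := by
        simp only [F, G, sum_norm_trigSum_sq hnN, sqrt_mul hN'.le]
        field_simp
        rw [sq_sqrt hN'.le]

end SawtoothKernel

section Prefix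

theorem sum_Aprefix_mul {n : ℕ} (f : ℝ → ℝ) (i : Fin n) :
    ∑ j, Aprefix n i j * f (((i : ℕ) : ℝ) - (j : ℕ)) = ∑ m ∈ range ((i : ℕ) + 1), f m := by
  simp only [Aprefix, Fin.le_iff_val_le_val, ite_mul, one_mul, zero_mul]
  rw [Fin.sum_univ_eq_sum_range (fun j => if j ≤ (i : ℕ) then f ((i : ℕ) - j) else 0),
    ← sum_filter, ← sum_range_reflect]
  have : (range n).filter (· ≤ (i : ℕ)) = range ((i : ℕ) + 1) := by
    ext j; simp only [mem_filter, mem_range]; omega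
  rw [this]
  refine sum_congr rfl fun j hj => ?_
  rw [mem_range] at hj
  rw [add_tsub_cancel_right, Nat.cast_sub (by omega)]

theorem sum_range_harmonic (n : ℕ) : ∑ i ∈ range n, harmonic i = n * (harmonic n - 1) := by
  induction n with
  | zero => simp
  | succ n ih =>
    rw [sum_range_succ, ih, harmonic_succ]
    push_cast
    field_simp
    ring

theorem three_halves_le_harmonic {n : ℕ} (hn : 2 ≤ n) : (3 / 2 : ℚ) ≤ harmonic n := by
  calc (3 / 2 : ℚ) = harmonic 2 := by norm_num [harmonic]
    _ ≤ harmonic n := sum_le_sum_of_subset_of_nonneg (range_mono hn) fun _ _ _ => by positivity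

theorem harmonic_sub_le_sum_sawtoothKernel {N i : ℕ} (hi : π * i ≤ N) :
    (harmonic i : ℝ) - π ^ 2 * i ^ 2 / N ^ 2 ≤ ∑ m ∈ range (i + 1), sawtoothKernel N m := by
  have hterm : ∀ m ∈ range i, 1 / ((m + 1 : ℕ) : ℝ) - π ^ 2 * i / N ^ 2 ≤
      sawtoothKernel N (m + 1 : ℕ) := fun m hm => by
    have hmi : ((m + 1 : ℕ) : ℝ) ≤ i := by exact_mod_cast mem_range.1 hm
    refine le_trans ?_ (one_div_sub_le_sawtoothKernel m.succ_pos (hi.trans' (by gcongr)))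
    gcongr
  have hK0 : sawtoothKernel N 0 = 0 := by simp [sawtoothKernel]
  rw [sum_range_succ', Nat.cast_zero, hK0, add_zero]
  calc (harmonic i : ℝ) - π ^ 2 * i ^ 2 / N ^ 2
      = ∑ m ∈ range i, (1 / ((m + 1 : ℕ) : ℝ) - π ^ 2 * i / N ^ 2) := by
        rw [sum_sub_distrib, sum_const, card_range, nsmul_eq_mul, harmonic]
        push_cast
        simp only [one_div]
        ring
    _ ≤ _ := sum_le_sum hterm

theorem sum_Aprefix_mul_sawtoothKernel_ge {n : ℕ} (hn : 2 ≤ n) :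
    n * log n / 12 ≤
      ∑ i, ∑ j, Aprefix n i j * sawtoothKernel (4 * n ^ 2) (((i : ℕ) : ℝ) - (j : ℕ)) := by
  have hn' : (2 : ℝ) ≤ n := by exact_mod_cast hn
  have hpi := pi_lt_four
  have hrow : ∀ i : Fin n, (harmonic i : ℝ) - 1 / (2 * n) ≤
      ∑ j, Aprefix n i j * sawtoothKernel (4 * n ^ 2) (((i : ℕ) : ℝ) - (j : ℕ)) := fun i => by
    have hi : ((i : ℕ) : ℝ) ≤ n := by exact_mod_cast i.2.le
    rw [sum_Aprefix_mul]
    refine le_trans ?_ (harmonic_sub_le_sum_sawtoothKernel (by push_cast; nlinarith [pi_pos]))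
    push_cast
    refine sub_le_sub_left ?_ _
    rw [div_le_div_iff₀ (by positivity) (by positivity)]
    have hpi2 : π ^ 2 ≤ 8 * n := by nlinarith [pi_pos]
    calc π ^ 2 * ((i : ℕ) : ℝ) ^ 2 * (2 * n) ≤ 8 * n * (n : ℝ) ^ 2 * (2 * n) := by gcongr
      _ = 1 * (4 * (n : ℝ) ^ 2) ^ 2 := by ring
  have hsum : ∑ i : Fin n, (harmonic i : ℝ) = n * (harmonic n - 1) := by
    rw [Fin.sum_univ_eq_sum_range (fun i => (harmonic i : ℝ)), ← Rat.cast_sum, sum_range_harmonic]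
    push_cast; ring
  have hH : (3 / 2 : ℝ) ≤ harmonic n := by
    simpa using (Rat.cast_le (K := ℝ)).2 (three_halves_le_harmonic hn)
  have hlog : log (n + 1) ≤ harmonic n := by exact_mod_cast log_add_one_le_harmonic n
  have hlog_mono : log n ≤ log (n + 1) := log_le_log (by positivity) (by linarith)
  have hlog_one : 1 ≤ log (n + 1) := by
    rw [le_log_iff_exp_le (by positivity)]
    linarith [exp_one_lt_d9]
  calc n * log n / 12 ≤ n * (harmonic n - 1) - 1 / 2 := by nlinarith
    _ = ∑ i : Fin n, ((harmonic i : ℝ) - 1 / (2 * n)) := by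
      rw [sum_sub_distrib, hsum, sum_const, card_univ, Fintype.card_fin, nsmul_eq_mul]
      field_simp
    _ ≤ _ := sum_le_sum fun i _ => hrow i

end Prefix

end DPPaper

/-- γ_{(p)}(A_prefix) ≳ n^{1/p} log n. -/
theorem gammaP_prefix_lower_bound :
    ∃ c : ℝ, 0 < c ∧ ∀ n : ℕ, 2 ≤ n → ∀ p : ℝ, 2 ≤ p →
      gammaP p (Aprefix n) ≥ c * (n : ℝ) ^ ((1 : ℝ) / p) * Real.log n := by
  refine ⟨(12 * π)⁻¹, by positivity, fun n hn p hp => le_gammaP fun k L R hLR => ?_⟩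
  have hn0 : (0 : ℝ) < n := by positivity
  have hupper := sum_mul_le_of_bilinear_le pi_pos.le hp
    (K := fun (i j : Fin n) => sawtoothKernel (4 * n ^ 2) (((i : ℕ) : ℝ) - (j : ℕ)))
    (sum_mul_sawtoothKernel_le (by nlinarith)) hLR
  simp only [Fintype.card_fin] at hupper
  have hpow : (n : ℝ) ^ (1 / 2 - 1 / p) * √n * n ^ (1 / p) = n := by
    rw [sqrt_eq_rpow, ← rpow_add hn0, ← rpow_add hn0,
      show 1 / 2 - 1 / p + 1 / 2 + 1 / p = 1 by ring, rpow_one]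
  have hscale : π * (n : ℝ) ^ (1 / 2 - 1 / p) * √n * ((12 * π)⁻¹ * n ^ (1 / p) * log n) =
      n * log n / 12 := by
    calc _ = π * (12 * π)⁻¹ * ((n : ℝ) ^ (1 / 2 - 1 / p) * √n * n ^ (1 / p)) * log n := by ring
      _ = n * log n / 12 := by rw [hpow]; field_simp
  refine le_of_mul_le_mul_left ?_ (by positivity : 0 < π * (n : ℝ) ^ (1 / 2 - 1 / p) * √n)
  rw [hscale]
  exact (sum_Aprefix_mul_sawtoothKernel_ge hn).trans hupper
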